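/- Fix a real number r > 0 and a real number ν. Then the sequence ⟨J_{ν+n}(r)⟩_{n ∈ ℤ} cannot contain two consecutive zeros; that is, there is no integer m with J_{ν+m}(r) = 0 and J_{ν+m+1}(r) = 0. -/
import Mathlib

open Real

/-- The Bessel function of the first kind of order `ν`, for `r > 0`:
`J_ν(r) = ∑_{k=0}^∞ ((-1)^k / (k! Γ(ν+k+1))) (r/2)^(ν+2k)`. -/
noncomputable def besselJ (ν r : ℝ) : ℝ :=
  ∑' k : ℕ, ((-1 : ℝ) ^ k / (k.factorial * Real.Gamma (ν + k + 1))) *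
    (r / 2) ^ (ν + 2 * (k : ℝ))

/-- The general term of the Bessel series with base `x = r/2`. -/
noncomputable def bt (x ν : ℝ) (k : ℕ) : ℝ :=
  ((-1 : ℝ) ^ k / (k.factorial * Real.Gamma (ν + k + 1))) *
    x ^ (ν + 2 * (k : ℝ))

lemma inv_gamma (y : ℝ) : (Real.Gamma y)⁻¹ = y * (Real.Gamma (y + 1))⁻¹ := by
  rcases eq_or_ne y 0 with rfl | hy
  · simp [Real.Gamma_zero]
  · rw [Real.Gamma_add_one hy, mul_inv, ← mul_assoc, mul_inv_cancel₀ hy, one_mul]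

lemma gamma_ge (b : ℝ) (hb : 1 ≤ b) : ∀ k : ℕ, b ^ k * Real.Gamma b ≤ Real.Gamma (b + k)
  | 0 => by simp
  | (k + 1) => by
    have hb0 : (0 : ℝ) < b := lt_of_lt_of_le one_pos hb
    have hbk : (1 : ℝ) ≤ b + k := le_add_of_le_of_nonneg hb (Nat.cast_nonneg k)
    have hbk0 : (0 : ℝ) < b + k := lt_of_lt_of_le one_pos hbk
    have ih := gamma_ge b hb k
    have hgpos : 0 ≤ Real.Gamma b := (Real.Gamma_pos_of_pos hb0).le
    have e : b + ((k : ℝ) + 1) = (b + k) + 1 := by ring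
    have h2 : Real.Gamma (b + ((k : ℕ) + 1 : ℕ)) = (b + k) * Real.Gamma (b + k) := by
      push_cast
      rw [e, Real.Gamma_add_one hbk0.ne']
    rw [h2]
    calc b ^ (k + 1) * Real.Gamma b = b * (b ^ k * Real.Gamma b) := by ring
      _ ≤ (b + k) * Real.Gamma (b + k) := by
          apply mul_le_mul (by linarith [Nat.cast_nonneg (α := ℝ) k]) ih
            (by positivity) hbk0.le

lemma rpow_split {x : ℝ} (hx : 0 < x) (μ : ℝ) (k : ℕ) :
    x ^ (μ + 2 * (k : ℝ)) = x ^ μ * (x ^ 2) ^ k := by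
  rw [Real.rpow_add hx]
  congr 1
  rw [← Real.rpow_natCast (x ^ 2) k, ← Real.rpow_natCast x 2, ← Real.rpow_mul hx.le]
  norm_num [mul_comm]

lemma bt_abs_summable {x : ℝ} (hx : 0 < x) (μ : ℝ) :
    Summable fun k => |bt x μ k| := by
  set N : ℕ := ⌈1 - μ⌉₊ + 1 with hN
  have hceil : (1 - μ : ℝ) ≤ ⌈1 - μ⌉₊ := Nat.le_ceil _
  have hNr : (2 : ℝ) ≤ μ + N := by
    have : ((N : ℝ)) = (⌈1 - μ⌉₊ : ℝ) + 1 := by push_cast [hN]; ring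
    rw [this]; linarith
  have hb1 : (1 : ℝ) ≤ μ + N + 1 := by linarith
  have hb0 : (0 : ℝ) < μ + N + 1 := by linarith
  have hGb : 0 < Real.Gamma (μ + N + 1) := Real.Gamma_pos_of_pos hb0
  rw [← summable_nat_add_iff N]
  have hC : Summable fun k : ℕ =>
      (x ^ (μ + 2 * (N : ℝ)) / Real.Gamma (μ + N + 1)) * ((x ^ 2) ^ k / k.factorial) := by
    have := (Real.summable_pow_div_factorial (x ^ 2)).mul_left
      (x ^ (μ + 2 * (N : ℝ)) / Real.Gamma (μ + N + 1))
    exact this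
  apply Summable.of_nonneg_of_le (fun k => abs_nonneg _) (fun k => ?_) hC
  -- compute |bt x μ (k + N)|
  have hGa : 0 < Real.Gamma (μ + ((k + N : ℕ) : ℝ) + 1) := by
    apply Real.Gamma_pos_of_pos; push_cast; linarith [Nat.cast_nonneg (α := ℝ) k]
  have hfac : (0 : ℝ) < ((k + N).factorial : ℝ) := by positivity
  have habs : |bt x μ (k + N)| =
      x ^ (μ + 2 * ((k + N : ℕ) : ℝ)) /
        (((k + N).factorial : ℝ) * Real.Gamma (μ + ((k + N : ℕ) : ℝ) + 1)) := by
    rw [bt, abs_mul, abs_div, abs_pow, abs_neg, abs_one, one_pow,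
      abs_of_pos (Real.rpow_pos_of_pos hx _), abs_of_pos (by positivity), one_div,
      div_eq_mul_inv, mul_comm]
  rw [habs]
  have hsplit : x ^ (μ + 2 * ((k + N : ℕ) : ℝ)) =
      x ^ (μ + 2 * (N : ℝ)) * (x ^ 2) ^ k := by
    have e : μ + 2 * ((k + N : ℕ) : ℝ) = (μ + 2 * (N : ℝ)) + 2 * (k : ℝ) := by
      push_cast; ring
    rw [e, rpow_split hx]
  rw [hsplit]
  have hGle : Real.Gamma (μ + N + 1) ≤ Real.Gamma (μ + ((k + N : ℕ) : ℝ) + 1) := by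
    have e : μ + ((k + N : ℕ) : ℝ) + 1 = (μ + N + 1) + k := by push_cast; ring
    rw [e]
    calc Real.Gamma (μ + N + 1) = 1 * Real.Gamma (μ + N + 1) := by ring
      _ ≤ (μ + N + 1) ^ k * Real.Gamma (μ + N + 1) := by
          exact mul_le_mul_of_nonneg_right (one_le_pow₀ hb1) hGb.le
      _ ≤ _ := gamma_ge _ hb1 k
  have hfacle : ((k.factorial : ℝ)) ≤ ((k + N).factorial : ℝ) := by
    exact_mod_cast Nat.factorial_le (Nat.le_add_right k N)
  have hden : Real.Gamma (μ + N + 1) * (k.factorial : ℝ) ≤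
      ((k + N).factorial : ℝ) * Real.Gamma (μ + ((k + N : ℕ) : ℝ) + 1) := by
    calc Real.Gamma (μ + N + 1) * (k.factorial : ℝ)
        ≤ Real.Gamma (μ + ((k + N : ℕ) : ℝ) + 1) * ((k + N).factorial : ℝ) := by
          apply mul_le_mul hGle hfacle (by positivity) hGa.le
      _ = _ := by ring
  calc x ^ (μ + 2 * (N : ℝ)) * (x ^ 2) ^ k /
        (((k + N).factorial : ℝ) * Real.Gamma (μ + ((k + N : ℕ) : ℝ) + 1))
      ≤ x ^ (μ + 2 * (N : ℝ)) * (x ^ 2) ^ k /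
        (Real.Gamma (μ + N + 1) * (k.factorial : ℝ)) := by
        apply div_le_div_of_nonneg_left (by positivity) (by positivity) hden
    _ = (x ^ (μ + 2 * (N : ℝ)) / Real.Gamma (μ + N + 1)) * ((x ^ 2) ^ k / k.factorial) := by
        rw [div_mul_div_comm]

lemma bt_summable {x : ℝ} (hx : 0 < x) (μ : ℝ) : Summable (bt x μ) :=
  (bt_abs_summable hx μ).of_abs

lemma bt_step {x : ℝ} (hx : 0 < x) (μ : ℝ) (k : ℕ) :
    (μ / x) * bt x μ (k + 1) - bt x (μ - 1) (k + 1) = bt x (μ + 1) k := by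
  have hx' : x ≠ 0 := hx.ne'
  simp only [bt, Nat.factorial_succ]
  push_cast
  have e1 : μ + 2 * ((k : ℝ) + 1) = (μ + 2 * k + 1) + 1 := by ring
  have e2 : μ - 1 + 2 * ((k : ℝ) + 1) = μ + 2 * k + 1 := by ring
  have e3 : μ + 1 + 2 * (k : ℝ) = μ + 2 * k + 1 := by ring
  have e4 : μ + ((k : ℝ) + 1) + 1 = (μ + k + 1) + 1 := by ring
  have e5 : μ - 1 + ((k : ℝ) + 1) + 1 = μ + k + 1 := by ring
  have e6 : μ + 1 + (k : ℝ) + 1 = (μ + k + 1) + 1 := by ring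
  rw [e1, e2, e3, e4, e5, e6, Real.rpow_add_one hx']
  simp only [div_eq_mul_inv, mul_inv]
  rw [inv_gamma (μ + k + 1)]
  have hfk : ((k.factorial : ℝ)) ≠ 0 := by positivity
  have hk1 : ((k : ℝ) + 1) ≠ 0 := by positivity
  set g := (Real.Gamma ((μ + k + 1) + 1))⁻¹ with hg
  clear_value g
  set p := x ^ (μ + 2 * (k : ℝ) + 1) with hp
  clear_value p
  field_simp
  ring

lemma bt_rec {x : ℝ} (hx : 0 < x) (μ : ℝ) :
    (∑' k, bt x (μ + 1) k) = (μ / x) * (∑' k, bt x μ k) - ∑' k, bt x (μ - 1) k := by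
  have hs1 := bt_summable hx μ
  have hs2 := bt_summable hx (μ - 1)
  have hc : Summable fun j => (μ / x) * bt x μ j - bt x (μ - 1) j :=
    (hs1.mul_left _).sub hs2
  have h0 : (μ / x) * bt x μ 0 - bt x (μ - 1) 0 = 0 := by
    have hx' : x ≠ 0 := hx.ne'
    simp only [bt, Nat.cast_zero, Nat.factorial_zero, Nat.cast_one, pow_zero, mul_zero,
      add_zero, one_mul]
    have e2 : μ - 1 + 1 = μ := by ring
    rw [e2, Real.rpow_sub hx, Real.rpow_one, one_div, one_div, inv_gamma μ]
    set g := (Real.Gamma (μ + 1))⁻¹ with hg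
    clear_value g
    field_simp
    ring
  calc (∑' k, bt x (μ + 1) k)
      = ∑' k, ((μ / x) * bt x μ (k + 1) - bt x (μ - 1) (k + 1)) :=
        tsum_congr fun k => (bt_step hx μ k).symm
    _ = (μ / x) * (∑' k, bt x μ k) - ∑' k, bt x (μ - 1) k := by
        have := Summable.tsum_eq_zero_add hc
        rw [h0, zero_add] at this
        rw [← this, Summable.tsum_sub (hs1.mul_left _) hs2, tsum_mul_left]

lemma div_shuffle (A B D E : ℝ) : A * B / (E * D) = A / D * (B / E) := by
  rw [div_mul_div_comm, mul_comm D E]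

lemma besselJ_eq (ν r : ℝ) : besselJ ν r = ∑' k, bt (r / 2) ν k :=
  tsum_congr fun k => rfl

lemma besselJ_rec {r : ℝ} (hr : 0 < r) (μ : ℝ) :
    besselJ (μ + 1) r = (2 * μ / r) * besselJ μ r - besselJ (μ - 1) r := by
  have hx : 0 < r / 2 := by linarith
  have h := bt_rec hx μ
  rw [besselJ_eq, besselJ_eq, besselJ_eq, h]
  congr 1
  congr 1
  rw [div_div_eq_mul_div]
  ring

set_option maxHeartbeats 1000000 in
lemma bt_pos {x : ℝ} (hx : 0 < x) {μ : ℝ} (h0 : 0 ≤ μ)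
    (h1 : 3 * x ^ 2 ≤ μ + 1) : 0 < ∑' k, bt x μ k := by
  have hμ1 : (0 : ℝ) < μ + 1 := by linarith
  have hG : 0 < Real.Gamma (μ + 1) := Real.Gamma_pos_of_pos hμ1
  set C : ℝ := x ^ μ / Real.Gamma (μ + 1) with hC
  have hCpos : 0 < C := by
    rw [hC]; exact div_pos (Real.rpow_pos_of_pos hx μ) hG
  set q : ℝ := x ^ 2 / (μ + 1) with hq
  have hq0 : 0 ≤ q := by positivity
  have hq3 : q ≤ 1 / 3 := by
    rw [hq, div_le_iff₀ hμ1]; nlinarith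
  have hqlt : q < 1 := by linarith
  have hs := bt_summable hx μ
  rw [Summable.tsum_eq_zero_add hs]
  have hb0 : bt x μ 0 = C := by
    simp only [bt, Nat.cast_zero, Nat.factorial_zero, Nat.cast_one, pow_zero, mul_zero,
      add_zero, one_mul, zero_add]
    rw [hC]
    ring
  -- tail bound
  have htail : ∀ k : ℕ, |bt x μ (k + 1)| ≤ C * q ^ (k + 1) := by
    intro k
    have hGa : 0 < Real.Gamma (μ + ((k + 1 : ℕ) : ℝ) + 1) := by
      apply Real.Gamma_pos_of_pos; push_cast; linarith [Nat.cast_nonneg (α := ℝ) k]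
    have habs : |bt x μ (k + 1)| =
        x ^ (μ + 2 * ((k + 1 : ℕ) : ℝ)) /
          (((k + 1).factorial : ℝ) * Real.Gamma (μ + ((k + 1 : ℕ) : ℝ) + 1)) := by
      rw [bt, abs_mul, abs_div, abs_pow, abs_neg, abs_one, one_pow,
        abs_of_pos (Real.rpow_pos_of_pos hx _), abs_of_pos (by positivity), one_div,
        div_eq_mul_inv, mul_comm]
    rw [habs, rpow_split hx]
    have hGle : (μ + 1) ^ (k + 1) * Real.Gamma (μ + 1) ≤
        Real.Gamma (μ + ((k + 1 : ℕ) : ℝ) + 1) := by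
      have e : μ + ((k + 1 : ℕ) : ℝ) + 1 = (μ + 1) + ((k + 1 : ℕ) : ℝ) := by push_cast; ring
      rw [e]
      exact gamma_ge (μ + 1) (by linarith) (k + 1)
    have hfle : (1 : ℝ) ≤ ((k + 1).factorial : ℝ) := by
      exact_mod_cast Nat.one_le_iff_ne_zero.mpr (Nat.factorial_ne_zero _)
    have hden : (μ + 1) ^ (k + 1) * Real.Gamma (μ + 1) ≤
        ((k + 1).factorial : ℝ) * Real.Gamma (μ + ((k + 1 : ℕ) : ℝ) + 1) := by
      calc (μ + 1) ^ (k + 1) * Real.Gamma (μ + 1)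
          ≤ Real.Gamma (μ + ((k + 1 : ℕ) : ℝ) + 1) := hGle
        _ = 1 * Real.Gamma (μ + ((k + 1 : ℕ) : ℝ) + 1) := by ring
        _ ≤ _ := mul_le_mul_of_nonneg_right hfle hGa.le
    have hdpos : (0 : ℝ) < (μ + 1) ^ (k + 1) * Real.Gamma (μ + 1) := by positivity
    calc x ^ μ * (x ^ 2) ^ (k + 1) /
          (((k + 1).factorial : ℝ) * Real.Gamma (μ + ((k + 1 : ℕ) : ℝ) + 1))
        ≤ x ^ μ * (x ^ 2) ^ (k + 1) / ((μ + 1) ^ (k + 1) * Real.Gamma (μ + 1)) := by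
          apply div_le_div_of_nonneg_left (by positivity) hdpos hden
      _ = C * q ^ (k + 1) := by
          rw [hC, hq, div_pow, div_shuffle]
  -- sum of the tail
  have hsum1 : Summable fun k => |bt x μ (k + 1)| :=
    (summable_nat_add_iff 1).mpr (bt_abs_summable hx μ)
  have hfun : (fun k : ℕ => C * q ^ (k + 1)) = fun k : ℕ => (C * q) * q ^ k := by
    funext k; ring
  have hsum2 : Summable fun k : ℕ => C * q ^ (k + 1) := by
    rw [hfun]; exact (summable_geometric_of_lt_one hq0 hqlt).mul_left _
  have habs_tsum : |∑' k, bt x μ (k + 1)| ≤ ∑' k : ℕ, C * q ^ (k + 1) := by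
    calc |∑' k, bt x μ (k + 1)| ≤ ∑' k, |bt x μ (k + 1)| := by
          simpa [Real.norm_eq_abs] using
            norm_tsum_le_tsum_norm (f := fun k => bt x μ (k + 1)) (by simpa [Real.norm_eq_abs] using hsum1)
      _ ≤ ∑' k : ℕ, C * q ^ (k + 1) := Summable.tsum_le_tsum htail hsum1 hsum2
  have hval : ∑' k : ℕ, C * q ^ (k + 1) = (C * q) * (1 - q)⁻¹ := by
    rw [hfun, tsum_mul_left, tsum_geometric_of_lt_one hq0 hqlt]
  have hbound : (C * q) * (1 - q)⁻¹ ≤ C * (1 / 2) := by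
    have h23 : (2 : ℝ) / 3 ≤ 1 - q := by linarith
    have hinv : (1 - q)⁻¹ ≤ 3 / 2 := by
      rw [inv_le_comm₀ (by linarith) (by norm_num)]
      linarith
    calc (C * q) * (1 - q)⁻¹ ≤ (C * (1/3)) * (3/2) := by
          apply mul_le_mul (mul_le_mul_of_nonneg_left hq3 hCpos.le) hinv
            (by positivity) (by positivity)
      _ = C * (1 / 2) := by ring
  have hfin : |∑' k, bt x μ (k + 1)| ≤ C * (1 / 2) := by
    rw [hval] at habs_tsum; linarith
  have := neg_abs_le (∑' k, bt x μ (k + 1))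
  rw [hb0]
  linarith

lemma besselJ_pos {r : ℝ} (hr : 0 < r) {μ : ℝ} (h0 : 0 ≤ μ)
    (h1 : 3 * (r / 2) ^ 2 ≤ μ + 1) : 0 < besselJ μ r := by
  rw [besselJ_eq]
  exact bt_pos (by linarith : (0:ℝ) < r / 2) h0 h1

theorem besselJ_no_consecutive_zeros (ν r : ℝ) (hr : 0 < r) :
    ¬ ∃ m : ℤ, besselJ (ν + m) r = 0 ∧ besselJ (ν + m + 1) r = 0 := by
  rintro ⟨m, h0, h1⟩
  have key : ∀ n : ℕ, besselJ (ν + m + n) r = 0 ∧ besselJ (ν + m + n + 1) r = 0 := by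
    intro n
    induction n with
    | zero => simpa using ⟨h0, h1⟩
    | succ n ih =>
      have hrec := besselJ_rec hr (ν + m + n + 1)
      have e2 : ν + (m : ℝ) + n + 1 - 1 = ν + m + n := by ring
      rw [e2, ih.1, ih.2] at hrec
      have hz : besselJ (ν + m + n + 1 + 1) r = 0 := by rw [hrec]; ring
      constructor
      · have e : ν + (m : ℝ) + ((n : ℝ) + 1) = ν + m + n + 1 := by ring
        push_cast
        rw [e]; exact ih.2
      · have e : ν + (m : ℝ) + ((n : ℝ) + 1) + 1 = ν + m + n + 1 + 1 := by ring
        push_cast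
        rw [e]; exact hz
  set n : ℕ := ⌈3 * (r / 2) ^ 2 + |ν + (m : ℝ)|⌉₊ with hn
  have hle : 3 * (r / 2) ^ 2 + |ν + (m : ℝ)| ≤ (n : ℝ) := Nat.le_ceil _
  have hna := neg_abs_le (ν + (m : ℝ))
  have hpos : 0 < besselJ (ν + m + n) r := by
    apply besselJ_pos hr
    · nlinarith [sq_nonneg (r / 2)]
    · nlinarith [abs_nonneg (ν + (m : ℝ))]
  rw [(key n).1] at hpos
  exact lt_irrefl 0 hpos
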